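/- Let N ≥ 2. There is no nonzero σ-finite Borel measure μ on [0,1] that is absolutely continuous with respect to Lebesgue measure and invariant under F(N), i.e. satisfying μ(f⁻¹(A)) = μ(A) for every f ∈ F(N) and every Borel set A ⊆ [0,1]. Equivalently, any such invariant absolutely continuous σ-finite measure is the zero measure. -/

import Mathlib

/-- A real number is an `N`-adic rational if it equals `k / N^m` for some `k : ℤ`, `m : ℕ`. -/
def IsNAdic (N : ℕ) (x : ℝ) : Prop :=
  ∃ (k : ℤ) (m : ℕ), x = (k : ℝ) / (N : ℝ) ^ m

/-- Membership (as a map of `[0,1]`) in the generalized Thompson group `F(N)`: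
`f 0 = 0`, `f 1 = 1`, and there is a finite partition `0 = a 0 < a 1 < ⋯ < a n = 1`
of `[0,1]` by `N`-adic rationals such that on each piece `[a i, a (i+1)]` the map `f`
is affine with slope an integer power of `N`.  (Such an `f` is automatically an
increasing piecewise-linear homeomorphism of `[0,1]` onto itself, with all
non-differentiability points `N`-adic.) -/
def InFN (N : ℕ) (f : ℝ → ℝ) : Prop :=
  f 0 = 0 ∧ f 1 = 1 ∧
    ∃ (n : ℕ) (a : ℕ → ℝ), 0 < n ∧ a 0 = 0 ∧ a n = 1 ∧
      (∀ i < n, a i < a (i + 1)) ∧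
      (∀ i ≤ n, IsNAdic N (a i)) ∧
      (∀ i < n, ∃ q : ℤ, ∀ x ∈ Set.Icc (a i) (a (i + 1)),
        f x = f (a i) + (N : ℝ) ^ q * (x - a i))

open MeasureTheory

/-!
Let `h` be the density of `μ` with respect to Lebesgue measure on `[0,1]`. For an `N`-adic
`a > 0` the element `thompsonMap N a` of `F(N)` has slopes `1/N`, `1`, `N` on `[0, a]`,
`[a, 1 - a/N]`, `[1 - a/N, 1]`. On its middle piece it is a translation by `a - a/N`, so
invariance of `μ` makes `h` a.e. invariant under translations by arbitrarily small amounts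
(taking `a = N⁻ᵐ`), away from the endpoints. A Lebesgue density argument shows that a set
invariant in this sense is null or conull in `(0,1)`, hence `h` is a.e. a constant `C`, finite
since `μ` is σ-finite. On its first piece the map is the dilation `x ↦ x / N`, which forces
`C a = C a / N`, so `C = 0`.
-/

open Filter Set Metric Topology
open scoped ENNReal

namespace IsNAdic

variable {N : ℕ} {x : ℝ}

lemma zero : IsNAdic N 0 := ⟨0, 0, by simp⟩

lemma one : IsNAdic N 1 := ⟨1, 0, by simp⟩

lemma inv_pow (m : ℕ) : IsNAdic N ((N : ℝ)⁻¹ ^ m) := ⟨1, m, by simp⟩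

lemma div_natCast (hx : IsNAdic N x) : IsNAdic N (x / N) := by
  obtain ⟨k, m, rfl⟩ := hx
  exact ⟨k, m + 1, by rw [div_div, pow_succ]⟩

lemma one_sub (hN : N ≠ 0) (hx : IsNAdic N x) : IsNAdic N (1 - x) := by
  obtain ⟨k, m, rfl⟩ := hx
  refine ⟨N ^ m - k, m, ?_⟩
  have : (N : ℝ) ^ m ≠ 0 := by positivity
  push_cast
  field_simp

end IsNAdic

noncomputable def thompsonMap (N : ℕ) (a x : ℝ) : ℝ :=
  if x ≤ a then x / N else if x ≤ 1 - a / N then x - (a - a / N) else N * x - (N - 1)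

section thompsonMap

variable {N : ℕ} {a x : ℝ}

lemma thompsonMap_of_le (hx : x ≤ a) : thompsonMap N a x = x / N := if_pos hx

lemma thompsonMap_of_mem_Icc (hx : x ∈ Icc a (1 - a / N)) :
    thompsonMap N a x = x - (a - a / N) := by
  by_cases hxa : x ≤ a
  · rw [thompsonMap_of_le hxa, le_antisymm hxa hx.1]
    ring
  · simp [thompsonMap, hxa, hx.2]

lemma thompsonMap_of_ge (hN : N ≠ 0) (ha : a < 1 - a / N) (hx : 1 - a / N ≤ x) :
    thompsonMap N a x = N * x - (N - 1) := by
  rcases hx.eq_or_lt with rfl | hx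
  · rw [thompsonMap_of_mem_Icc ⟨ha.le, le_rfl⟩]
    field_simp
    ring
  · simp [thompsonMap, (ha.trans hx).not_ge, hx.not_ge]

theorem inFN_thompsonMap (hN : 0 < N) (ha : IsNAdic N a) (ha0 : 0 < a) (ha1 : a < 1 - a / N) :
    InFN N (thompsonMap N a) := by
  have hb : 1 - a / N < 1 := sub_lt_self 1 (by positivity)
  have h0 : thompsonMap N a 0 = 0 := by simp [thompsonMap_of_le ha0.le]
  refine ⟨h0, by rw [thompsonMap_of_ge hN.ne' ha1 hb.le]; ring, 3,
    fun i => [0, a, 1 - a / N, 1].getD i 1, by norm_num, rfl, rfl, ?_, ?_, ?_⟩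
  · intro i hi
    interval_cases i <;> simp [ha0, ha1, hb]
  · intro i hi
    interval_cases i
    exacts [IsNAdic.zero, ha, ha.div_natCast.one_sub hN.ne', IsNAdic.one]
  · intro i hi
    interval_cases i
    · refine ⟨-1, fun x hx => ?_⟩
      simp only [List.getD_cons_succ, List.getD_cons_zero] at hx ⊢
      simp [thompsonMap_of_le hx.2, h0, div_eq_inv_mul]
    · refine ⟨0, fun x hx => ?_⟩
      simp only [List.getD_cons_succ, List.getD_cons_zero] at hx ⊢
      simp [thompsonMap_of_mem_Icc hx, thompsonMap_of_le le_rfl]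
      ring
    · refine ⟨1, fun x hx => ?_⟩
      simp only [List.getD_cons_succ, List.getD_cons_zero] at hx ⊢
      simp [thompsonMap_of_ge hN.ne' ha1 hx.1, thompsonMap_of_mem_Icc ⟨ha1.le, le_rfl⟩]
      field_simp
      ring

lemma sub_lt_thompsonMap_of_lt (hN : 0 < N) (ha : a < 1 - a / N) (hx : 1 - a / N < x) :
    1 - a < thompsonMap N a x := by
  have hN' : (0 : ℝ) < N := by exact_mod_cast hN
  have : (N : ℝ) * (1 - a / N) < N * x := mul_lt_mul_of_pos_left hx hN'
  rw [mul_sub, mul_div_cancel₀ _ hN'.ne', mul_one] at this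
  rw [thompsonMap_of_ge hN.ne' ha hx.le]
  linarith

theorem thompsonMap_preimage_of_subset_Icc (hN : 0 < N) (ha : a < 1 - a / N) {B : Set ℝ}
    (hB : B ⊆ Icc (a / N) (1 - a)) : thompsonMap N a ⁻¹' B = (· - (a - a / N)) ⁻¹' B := by
  have hN' : (0 : ℝ) < N := by exact_mod_cast hN
  have not_mem : ∀ y, y < a / N ∨ 1 - a < y → y ∉ B := fun y hy hyB => by
    have := hB hyB
    rcases hy with hy | hy <;> linarith [this.1, this.2]
  ext x
  simp only [mem_preimage]
  by_cases hx : x ∈ Icc a (1 - a / N)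
  · rw [thompsonMap_of_mem_Icc hx]
  rw [mem_Icc, not_and_or, not_le, not_le] at hx
  rcases hx with hx | hx
  · refine iff_of_false (not_mem _ (.inl ?_)) (not_mem _ (.inl (by linarith)))
    rw [thompsonMap_of_le hx.le]
    exact div_lt_div_of_pos_right hx hN'
  · exact iff_of_false (not_mem _ (.inr (sub_lt_thompsonMap_of_lt hN ha hx)))
      (not_mem _ (.inr (by linarith)))

theorem thompsonMap_preimage_Icc_zero (hN : 0 < N) (ha : a < 1 - a / N) :
    thompsonMap N a ⁻¹' Icc 0 (a / N) = Icc 0 a := by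
  have hN' : (0 : ℝ) < N := by exact_mod_cast hN
  ext x
  simp only [mem_preimage, mem_Icc]
  rcases le_or_gt x a with hxa | hxa
  · rw [thompsonMap_of_le hxa, div_le_div_iff_of_pos_right hN', le_div_iff₀ hN', zero_mul]
  refine iff_of_false (fun hx => ?_) (fun hx => hxa.not_ge hx.2)
  rcases le_or_gt x (1 - a / N) with hxb | hxb
  · rw [thompsonMap_of_mem_Icc ⟨hxa.le, hxb⟩] at hx
    linarith
  · linarith [sub_lt_thompsonMap_of_lt hN ha hxb]

end thompsonMap

def SmallShiftInvariant {α : Type*} (g : ℝ → α) : Prop :=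
  ∀ ε > 0, ∃ c ∈ Ioo 0 ε, ∀ᵐ y, y ∈ Icc ε (1 - ε) → g (y + c) = g y

lemma volume_inter_closedBall_le_add (S : Set ℝ) (y y' r : ℝ) :
    volume (S ∩ closedBall y r) ≤
      volume (S ∩ closedBall y' r) + ENNReal.ofReal (2 * dist y y') := by
  set d := dist y y'
  have hsub : S ∩ closedBall y r ⊆
      (S ∩ closedBall y' r) ∪ (closedBall y' (r + d) \ closedBall y' r) := by
    rintro t ⟨htS, ht⟩
    by_cases ht' : t ∈ closedBall y' r
    · exact .inl ⟨htS, ht'⟩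
    · exact .inr ⟨(dist_triangle t y y').trans (add_le_add_left ht d), ht'⟩
  have hshell : volume (closedBall y' (r + d) \ closedBall y' r) ≤ ENNReal.ofReal (2 * d) := by
    rw [measure_sdiff_le_iff_le_add measurableSet_closedBall.nullMeasurableSet
      (closedBall_subset_closedBall (le_add_of_nonneg_right dist_nonneg))
      measure_closedBall_lt_top.ne, Real.volume_closedBall, Real.volume_closedBall, mul_add]
    exact ENNReal.ofReal_add_le
  calc volume (S ∩ closedBall y r)
      ≤ volume (S ∩ closedBall y' r) + volume (closedBall y' (r + d) \ closedBall y' r) :=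
        (measure_mono hsub).trans (measure_union_le _ _)
    _ ≤ volume (S ∩ closedBall y' r) + ENNReal.ofReal (2 * d) := by gcongr

lemma volume_inter_closedBall_add_eq {S : Set ℝ} {c y r : ℝ}
    (h : ∀ᵐ t, t ∈ closedBall y r → (t + c ∈ S) = (t ∈ S)) :
    volume (S ∩ closedBall (y + c) r) = volume (S ∩ closedBall y r) := by
  rw [← measure_preimage_add_right volume c]
  refine measure_congr (h.mono fun t ht => propext ?_)
  change t + c ∈ S ∧ t + c ∈ closedBall (y + c) r ↔ t ∈ S ∧ t ∈ closedBall y r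
  rw [mem_closedBall, mem_closedBall, dist_add_right]
  exact and_congr_left fun htB => (ht htB).to_iff

lemma volume_inter_closedBall_add_mul_eq {S : Set ℝ} {ε c y r : ℝ} (hc0 : 0 ≤ c)
    (hc : ∀ᵐ t, t ∈ Icc ε (1 - ε) → (t + c ∈ S) = (t ∈ S)) (hy : ε ≤ y - r) :
    ∀ k : ℕ, y + k * c + r ≤ 1 - ε →
      volume (S ∩ closedBall (y + k * c) r) = volume (S ∩ closedBall y r) := by
  intro k
  induction k with
  | zero => simp
  | succ k ih =>
    intro hk
    push_cast at hk ⊢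
    have hkc : 0 ≤ k * c := by positivity
    rw [add_one_mul, ← add_assoc, volume_inter_closedBall_add_eq, ih (by linarith)]
    refine hc.mono fun t ht htB => ht ?_
    rw [Real.closedBall_eq_Icc] at htB
    exact ⟨by linarith [htB.1], by linarith [htB.2]⟩

namespace SmallShiftInvariant

variable {α β : Type*} {g : ℝ → α}

lemma comp (h : SmallShiftInvariant g) (f : α → β) : SmallShiftInvariant (f ∘ g) :=
  fun ε hε => (h ε hε).imp fun _ ⟨hc, hgc⟩ => ⟨hc, hgc.mono fun y hy hyε => by simp [hy hyε]⟩

lemma exists_shift_lt (h : SmallShiftInvariant g) {ε δ : ℝ} (hε : 0 < ε) (hδ : 0 < δ) :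
    ∃ c ∈ Ioo 0 δ, ∀ᵐ y, y ∈ Icc ε (1 - ε) → g (y + c) = g y := by
  obtain ⟨c, hc, hgc⟩ := h (min ε δ) (lt_min hε hδ)
  refine ⟨c, ⟨hc.1, hc.2.trans_le (min_le_right _ _)⟩, hgc.mono fun y hy hyε => hy ⟨?_, ?_⟩⟩
  · exact (min_le_left _ _).trans hyε.1
  · exact hyε.2.trans (by linarith [min_le_left ε δ])

lemma volume_inter_closedBall_eq {S : Set ℝ} (h : SmallShiftInvariant (· ∈ S)) {x z r : ℝ}
    (hx : 0 < x - r) (hxz : x ≤ z) (hz : z + r < 1) :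
    volume (S ∩ closedBall x r) = volume (S ∩ closedBall z r) := by
  set ε := min (x - r) (1 - z - r)
  have hε : 0 < ε := lt_min hx (by linarith)
  -- Shifting `x` by multiples of a small `c` gets within `c` of `z` without changing the local
  -- measure, which is `2`-Lipschitz in the centre.
  have approx : ∀ δ > 0, ∃ y, volume (S ∩ closedBall y r) = volume (S ∩ closedBall x r) ∧
      dist y z ≤ δ := by
    intro δ hδ
    obtain ⟨c, ⟨hc0, hcδ⟩, hc⟩ := h.exists_shift_lt hε hδ
    set k := ⌊(z - x) / c⌋₊
    have hk : k * c ≤ z - x := (le_div_iff₀ hc0).1 (Nat.floor_le (div_nonneg (by linarith) hc0.le))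
    have hk' : z - x < k * c + c := by
      rw [← add_one_mul, ← div_lt_iff₀ hc0]
      exact Nat.lt_floor_add_one _
    refine ⟨x + k * c, volume_inter_closedBall_add_mul_eq hc0.le hc (min_le_left _ _) k
      (by linarith [min_le_right (x - r) (1 - z - r)]), ?_⟩
    rw [Real.dist_eq, abs_le]
    constructor <;> linarith
  have close : ∀ y w : ℝ, ∀ δ : NNReal, dist y w ≤ δ / 2 →
      volume (S ∩ closedBall y r) ≤ volume (S ∩ closedBall w r) + δ := fun y w δ hyw => by
    refine (volume_inter_closedBall_le_add S y w r).trans ?_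
    rw [← ENNReal.ofReal_coe_nnreal]
    gcongr
    linarith
  refine le_antisymm (ENNReal.le_of_forall_pos_le_add fun δ hδ _ => ?_)
    (ENNReal.le_of_forall_pos_le_add fun δ hδ _ => ?_)
  all_goals obtain ⟨y, hy, hyz⟩ := approx (δ / 2) (by positivity)
  · exact hy ▸ close y z δ hyz
  · exact hy ▸ close z y δ (dist_comm y z ▸ hyz)

lemma eventuallyEq_measure_inter_closedBall_div {S : Set ℝ} (h : SmallShiftInvariant (· ∈ S))
    {x z : ℝ} (hx : x ∈ Ioo 0 1) (hz : z ∈ Ioo 0 1) :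
    (fun r => volume (S ∩ closedBall x r) / volume (closedBall x r)) =ᶠ[𝓝[>] 0]
      fun r => volume (S ∩ closedBall z r) / volume (closedBall z r) := by
  wlog hxz : x ≤ z generalizing x z
  · exact (this hz hx (le_of_not_ge hxz)).symm
  have hpos : 0 < min x (1 - z) := lt_min hx.1 (by linarith [hz.2])
  filter_upwards [eventually_nhdsWithin_of_eventually_nhds (eventually_lt_nhds hpos)] with r hr
  rw [Real.volume_closedBall, Real.volume_closedBall, h.volume_inter_closedBall_eq
    (by linarith [min_le_left x (1 - z)]) hxz (by linarith [min_le_right x (1 - z)])]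

theorem ae_mem_or_ae_notMem {S : Set ℝ} (hS : MeasurableSet S) (h : SmallShiftInvariant (· ∈ S)) :
    (∀ᵐ x ∂volume.restrict (Ioo 0 1), x ∈ S) ∨ ∀ᵐ x ∂volume.restrict (Ioo 0 1), x ∉ S := by
  have good : ∀ᵐ x ∂volume.restrict (Ioo 0 1), x ∈ Ioo 0 1 ∧
      Tendsto (fun r => volume (S ∩ closedBall x r) / volume (closedBall x r)) (𝓝[>] 0)
        (𝓝 (S.indicator 1 x)) :=
    (ae_restrict_mem measurableSet_Ioo).and
      (ae_restrict_of_ae (Besicovitch.ae_tendsto_measure_inter_div_of_measurableSet volume hS))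
  by_contra! hne
  obtain ⟨x, hxS, hx, hx_lim⟩ := (hne.1.and_eventually good).exists
  obtain ⟨z, hzS, hz, hz_lim⟩ := (hne.2.and_eventually good).exists
  have := tendsto_nhds_unique (hx_lim.congr' (h.eventuallyEq_measure_inter_closedBall_div hx hz))
    hz_lim
  simp [hxS, hzS] at this

theorem exists_ae_eq_const [MeasurableSpace α] [MeasurableSpace.CountablySeparated α]
    [Nonempty α] (hg : Measurable g) (h : SmallShiftInvariant g) :
    ∃ C, g =ᵐ[volume.restrict (Ioo 0 1)] fun _ => C :=
  exists_eventuallyEq_const_of_forall_separating MeasurableSet fun U hU =>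
    ae_mem_or_ae_notMem (S := g ⁻¹' U) (hg hU) (h.comp (· ∈ U))

end SmallShiftInvariant

theorem rnDeriv_add_ae_eq {μ : Measure ℝ} [SigmaFinite μ] {K W : Set ℝ} {c : ℝ}
    (hac : μ ≪ volume.restrict K) (hW : MeasurableSet W) (hWK : W ⊆ K)
    (hWc : ∀ y ∈ W, y + c ∈ K) (hinv : ∀ B ⊆ W, MeasurableSet B → μ ((· - c) ⁻¹' B) = μ B) :
    ∀ᵐ y, y ∈ W → μ.rnDeriv (volume.restrict K) (y + c) = μ.rnDeriv (volume.restrict K) y := by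
  set h := μ.rnDeriv (volume.restrict K)
  have hmeas : Measurable h := Measure.measurable_rnDeriv _ _
  have setLIntegral_eq : ∀ B, MeasurableSet B → B ⊆ K → ∫⁻ x in B, h x = μ B := fun B hB hBK => by
    rw [← Measure.setLIntegral_rnDeriv' hac hB, Measure.restrict_restrict hB,
      inter_eq_self_of_subset_left hBK]
  refine (ae_restrict_iff' hW).1 (ae_eq_of_forall_setLIntegral_eq_of_sigmaFinite
    (hmeas.comp (measurable_add_const c)) hmeas fun s hs _ => ?_)
  rw [Measure.restrict_restrict hs]
  have hB : MeasurableSet (s ∩ W) := hs.inter hW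
  have hshift : (· + c) ⁻¹' ((· - c) ⁻¹' (s ∩ W)) = s ∩ W := by ext; simp
  calc ∫⁻ y in s ∩ W, h (y + c)
      = ∫⁻ x in (· - c) ⁻¹' (s ∩ W), h x := by
        rw [← (measurePreserving_add_right volume c).setLIntegral_comp_preimage
          (hB.preimage (measurable_sub_const c)) hmeas, hshift]
    _ = μ ((· - c) ⁻¹' (s ∩ W)) :=
        setLIntegral_eq _ (hB.preimage (measurable_sub_const c)) fun x hx => by
          simpa using hWc _ hx.2
    _ = μ (s ∩ W) := hinv _ inter_subset_right hB
    _ = ∫⁻ y in s ∩ W, h y := (setLIntegral_eq _ hB (inter_subset_right.trans hWK)).symm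

section Invariant

variable {N : ℕ} {μ : Measure ℝ}

theorem smallShiftInvariant_rnDeriv (hN : 2 ≤ N) [SigmaFinite μ]
    (hac : μ ≪ volume.restrict (Icc 0 1))
    (hinv : ∀ f : ℝ → ℝ, InFN N f → ∀ A : Set ℝ, MeasurableSet A → μ (f ⁻¹' A) = μ A) :
    SmallShiftInvariant (μ.rnDeriv (volume.restrict (Icc 0 1))) := by
  intro ε hε
  have hN1 : (1 : ℝ) < N := by exact_mod_cast hN
  obtain ⟨m, hm⟩ := exists_pow_lt_of_lt_one (lt_min hε one_half_pos) (inv_lt_one_of_one_lt₀ hN1)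
  set a := (N : ℝ)⁻¹ ^ m
  have ha : 0 < a / N ∧ a / N < a := ⟨by positivity, div_lt_self (by positivity) hN1⟩
  have hmin := min_le_left ε (1 / 2)
  have hmin' := min_le_right ε (1 / 2)
  have ha1 : a < 1 - a / N := by linarith
  refine ⟨a - a / N, ⟨by linarith, by linarith⟩, ?_⟩
  have hmem : ∀ B ⊆ Icc (a / N) (1 - a), MeasurableSet B →
      μ ((· - (a - a / N)) ⁻¹' B) = μ B := fun B hB hBm => by
    rw [← thompsonMap_preimage_of_subset_Icc (by omega) ha1 hB]
    exact hinv _ (inFN_thompsonMap (by omega) (.inv_pow m) (by positivity) ha1) B hBm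
  filter_upwards [rnDeriv_add_ae_eq hac measurableSet_Icc
    (fun y hy => ⟨by linarith [hy.1], by linarith [hy.2]⟩)
    (fun y hy => ⟨by linarith [hy.1], by linarith [hy.2]⟩) hmem] with y hy hyε
  exact hy ⟨by linarith [hyε.1], by linarith [hyε.2]⟩

theorem eq_zero_of_smul_volume_invariant (hN : 2 ≤ N) {C : ℝ≥0∞} (hC : C ≠ ⊤)
    (hinv : ∀ f : ℝ → ℝ, InFN N f → ∀ A : Set ℝ, MeasurableSet A →
      (C • volume.restrict (Icc (0 : ℝ) 1)) (f ⁻¹' A) = (C • volume.restrict (Icc (0 : ℝ) 1)) A) :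
    C = 0 := by
  have hN1 : (1 : ℝ) < N := by exact_mod_cast hN
  set a := (N : ℝ)⁻¹
  have ha_adic : IsNAdic N a := by simpa using IsNAdic.inv_pow (N := N) 1
  have ha : 0 < a / N ∧ a / N < a ∧ a ≤ 1 / 2 := by
    refine ⟨by positivity, div_lt_self (by positivity) hN1, ?_⟩
    rw [inv_le_comm₀ (by positivity) one_half_pos, one_div, inv_inv]
    exact_mod_cast hN
  have ha1 : a < 1 - a / N := by linarith
  have hval : ∀ t ∈ Icc (0 : ℝ) 1,
      (C • volume.restrict (Icc (0 : ℝ) 1)) (Icc 0 t) = C * ENNReal.ofReal t := fun t ht => by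
    rw [Measure.smul_apply, smul_eq_mul, Measure.restrict_apply measurableSet_Icc,
      inter_eq_self_of_subset_left (Icc_subset_Icc le_rfl ht.2), Real.volume_Icc, sub_zero]
  have hdil := hinv _ (inFN_thompsonMap (by omega) ha_adic (by positivity) ha1)
    (Icc 0 (a / N)) measurableSet_Icc
  rw [thompsonMap_preimage_Icc_zero (by omega) ha1, hval _ ⟨by positivity, by linarith⟩,
    hval _ ⟨by positivity, by linarith⟩] at hdil
  by_contra hC0
  rw [ENNReal.mul_right_inj hC0 hC, ENNReal.ofReal_eq_ofReal_iff (by positivity) (by positivity)]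
    at hdil
  linarith

end Invariant

theorem statement14 (N : ℕ) (hN : 2 ≤ N) (μ : Measure ℝ) [SigmaFinite μ]
    (hac : μ ≪ volume.restrict (Set.Icc (0 : ℝ) 1))
    (hinv : ∀ f : ℝ → ℝ, InFN N f → ∀ A : Set ℝ, MeasurableSet A →
      μ (f ⁻¹' A) = μ A) :
    μ = 0 := by
  set ν := volume.restrict (Icc (0 : ℝ) 1)
  obtain ⟨C, hC⟩ := (smallShiftInvariant_rnDeriv hN hac hinv).exists_ae_eq_const
    (Measure.measurable_rnDeriv μ ν)
  have hCν : μ.rnDeriv ν =ᵐ[ν] fun _ => C := by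
    rwa [Measure.restrict_congr_set Ioo_ae_eq_Icc] at hC
  have hμ : μ = C • ν := by
    rw [← Measure.withDensity_rnDeriv_eq μ ν hac, withDensity_congr_ae hCν, withDensity_const]
  have hC_top : C ≠ ⊤ := by
    have : (ae ν).NeBot := ae_neBot.2 (by simp [ν, Measure.restrict_eq_zero])
    obtain ⟨x, hx, hx_lt⟩ := (hCν.and (Measure.rnDeriv_lt_top μ ν)).exists
    exact hx.symm.trans_ne hx_lt.ne
  rw [hμ, eq_zero_of_smul_volume_invariant hN hC_top (hμ ▸ hinv), zero_smul]
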